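/- Let G be a finite group and let K, L, M be three distinct non-abelian subgroups of G, each of which centralizes the other two (i.e., every element of any one of them commutes with every element of the other two). Then the commuting graph Γ(G) is not perfect. -/

import Mathlib

/-!
Choose non-commuting pairs `a, b ∈ K`, `c, d ∈ L`, `e, f ∈ M`. Since the three subgroups
centralize each other, each of the five elements `b * f, c, a, d * e, b * d` commutes with its two
neighbours in this cyclic order and with neither of the other two: each non-commutation reduces
to one of `[a, b] ≠ 1`, `[c, d] ≠ 1`, `[e, f] ≠ 1`. So these elements induce a 5-cycle in the
commuting graph, an induced subgraph with clique number 2 and chromatic number 3.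
-/

open SimpleGraph

/-- A simple graph is *perfect* if every induced subgraph has chromatic number
equal to its clique number. -/
def SimpleGraph.IsPerfectGraph {V : Type*} (G : SimpleGraph V) : Prop :=
  ∀ s : Set V, (G.induce s).chromaticNumber = ((G.induce s).cliqueNum : ℕ∞)

/-- The commuting graph of a group `G`: vertices are the non-central elements of `G`,
with distinct vertices joined by an edge whenever they commute. -/
def commGraph (G : Type*) [Group G] :
    SimpleGraph {g : G // g ∉ Subgroup.center G} where
  Adj x y := x ≠ y ∧ Commute (x : G) (y : G)
  symm := ⟨fun _ _ h => ⟨h.1.symm, h.2.symm⟩⟩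
  loopless := ⟨fun _ h => h.1 rfl⟩

namespace SimpleGraph

variable {V : Type*} {G : SimpleGraph V}

theorem cycleGraph_cliqueFree_three (n : ℕ) : (cycleGraph (n + 4)).CliqueFree 3 := by
  rintro s hs
  obtain ⟨a, b, c, hab, hac, hbc, -⟩ := is3Clique_iff.mp hs
  rw [cycleGraph_adj] at hab hac hbc
  have h3 : (3 : Fin (n + 4)) ≠ 0 := by
    simp [Fin.ext_iff, Nat.mod_eq_of_lt (show 3 < n + 4 by omega)]
  -- `a - b`, `b - c` and `a - c = (a - b) + (b - c)` are all `±1`, forcing `3 = 0` or `1 = 0`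
  grind

theorem cliqueNum_lt_of_cliqueFree {n : ℕ} (h : G.CliqueFree n) : G.cliqueNum < n := by
  by_contra! hn
  obtain ⟨s, hs⟩ := G.exists_isNClique_cliqueNum
  exact h.mono hn s hs

theorem not_isPerfectGraph_of_embedding_cycleGraph {n : ℕ} (hn : 5 ≤ n) (hodd : Odd n)
    (f : cycleGraph n ↪g G) : ¬ G.IsPerfectGraph := by
  intro hG
  obtain ⟨m, rfl⟩ := Nat.exists_eq_add_of_le' hn
  have hω : (G.induce (Set.range f)).cliqueNum < 3 :=
    cliqueNum_lt_of_cliqueFree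
      ((cycleGraph_cliqueFree_three (m + 1)).comap ⟨f.isoInduceRange.symm.toCopy⟩)
  have hχ := hG (Set.range f)
  rw [← chromaticNumber_congr f.isoInduceRange,
    chromaticNumber_cycleGraph_of_odd _ (by omega) hodd] at hχ
  norm_cast at hχ
  omega

end SimpleGraph

section CommGraph

variable {G : Type*} [Group G]

theorem Commute.commute_mul_right_iff {g h x : G} (hg : Commute g x) :
    Commute (h * g) x ↔ Commute h x :=
  ⟨fun hhg => by simpa using hhg.mul_left hg.inv_left, fun hh => hh.mul_left hg⟩

theorem Commute.commute_mul_left_iff {g h x : G} (hg : Commute g x) :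
    Commute (g * h) x ↔ Commute h x :=
  ⟨fun hgh => by simpa using hg.inv_left.mul_left hgh, hg.mul_left⟩

-- `hdom` keeps the image outside the centre; `htwin` (distinct vertices have distinct closed
-- neighbourhoods) makes `v` injective.
def embeddingCommGraphOfCommuteIff {W : Type*} {H : SimpleGraph W} (v : W → G)
    (hv : ∀ i j, Commute (v i) (v j) ↔ i = j ∨ H.Adj i j)
    (hdom : ∀ i, ∃ j, ¬ (i = j ∨ H.Adj i j))
    (htwin : ∀ i j, (∀ k, (i = k ∨ H.Adj i k) ↔ (j = k ∨ H.Adj j k)) → i = j) :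
    H ↪g commGraph G :=
  have hinj : Function.Injective v := fun i j hij => htwin i j fun k => by rw [← hv, ← hv, hij]
  { toFun i := ⟨v i, fun hc => by
      obtain ⟨j, hj⟩ := hdom i
      exact hj ((hv i j).mp (Subgroup.mem_center_iff.mp hc (v j) : Commute (v j) (v i)).symm)⟩
    inj' i j hij := hinj (congrArg Subtype.val hij)
    map_rel_iff' {i j} := by
      show (⟨v i, _⟩ : {g : G // g ∉ Subgroup.center G}) ≠ ⟨v j, _⟩ ∧ Commute (v i) (v j) ↔ _
      rw [hv, Ne, Subtype.mk.injEq, hinj.eq_iff]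
      exact ⟨fun ⟨hne, h⟩ => h.resolve_left hne, fun h => ⟨h.ne, Or.inr h⟩⟩ }

theorem commute_iff_eq_or_cycleGraph_five_adj {v : Fin 5 → G}
    (hadj : ∀ i, Commute (v i) (v (i + 1))) (hnadj : ∀ i, ¬ Commute (v i) (v (i + 2)))
    (i j : Fin 5) : Commute (v i) (v j) ↔ i = j ∨ (cycleGraph 5).Adj i j := by
  obtain ⟨k, rfl⟩ : ∃ k, j = i + k := ⟨j - i, by abel⟩
  have hwrap : i + 3 + 2 = i ∧ i + 4 + 1 = i := by revert i; decide
  have hk : i = i + k ∨ (cycleGraph 5).Adj i (i + k) ↔ k = 0 ∨ k = 1 ∨ k = 4 := by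
    revert i k; decide
  rw [hk]
  fin_cases k
  · simp
  · simpa using hadj i
  · simpa using hnadj i
  · simpa using fun h => hnadj (i + 3) (by rw [hwrap.1]; exact h.symm)
  · simpa [hwrap.2] using (hadj (i + 4)).symm

theorem nonempty_embedding_cycleGraph_five_commGraph {K L M : Subgroup G}
    (hK : ∃ x ∈ K, ∃ y ∈ K, ¬ Commute x y) (hL : ∃ x ∈ L, ∃ y ∈ L, ¬ Commute x y)
    (hM : ∃ x ∈ M, ∃ y ∈ M, ¬ Commute x y)
    (hKL : ∀ x ∈ K, ∀ y ∈ L, Commute x y) (hKM : ∀ x ∈ K, ∀ z ∈ M, Commute x z)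
    (hLM : ∀ y ∈ L, ∀ z ∈ M, Commute y z) :
    Nonempty (cycleGraph 5 ↪g commGraph G) := by
  obtain ⟨a, ha, b, hb, hab⟩ := hK
  obtain ⟨c, hc, d, hd, hcd⟩ := hL
  obtain ⟨e, he, f, hf, hef⟩ := hM
  refine ⟨embeddingCommGraphOfCommuteIff ![b * f, c, a, d * e, b * d]
    (commute_iff_eq_or_cycleGraph_five_adj ?_ ?_) (by decide) (by decide)⟩
  · intro i
    fin_cases i
    · exact (hKL b hb c hc).mul_left (hLM c hc f hf).symm
    · exact (hKL a ha c hc).symm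
    · exact (hKL a ha d hd).mul_right (hKM a ha e he)
    · exact ((hKL b hb d hd).symm.mul_right (.refl d)).mul_left
        ((hKM b hb e he).symm.mul_right (hLM d hd e he).symm)
    · exact ((Commute.refl b).mul_right (hKM b hb f hf)).mul_left
        ((hKL b hb d hd).symm.mul_right (hLM d hd f hf))
  · intro i
    fin_cases i
    · exact fun h => hab ((hKM a ha f hf).symm.commute_mul_right_iff.mp h).symm
    · exact fun h => hcd ((hLM c hc e he).symm.commute_mul_right_iff.mp h.symm).symm
    · exact fun h => hab ((hKL a ha d hd).symm.commute_mul_right_iff.mp h.symm).symm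
    · exact fun h => hef ((hLM d hd f hf).commute_mul_left_iff.mp
        (((hKL b hb d hd).mul_right (hKM b hb e he)).commute_mul_left_iff.mp h.symm).symm)
    · exact fun h => hcd ((hKL b hb c hc).commute_mul_left_iff.mp h).symm

end CommGraph

theorem three_centralizing_nonabelian_subgroups_commGraph_not_isPerfect_general
    (G : Type*) [Group G] (K L M : Subgroup G)
    (hK : ∃ x ∈ K, ∃ y ∈ K, x * y ≠ y * x)
    (hL : ∃ x ∈ L, ∃ y ∈ L, x * y ≠ y * x)
    (hM : ∃ x ∈ M, ∃ y ∈ M, x * y ≠ y * x)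
    (hKL' : ∀ x ∈ K, ∀ y ∈ L, Commute x y)
    (hKM' : ∀ x ∈ K, ∀ z ∈ M, Commute x z)
    (hLM' : ∀ y ∈ L, ∀ z ∈ M, Commute y z) :
    ¬ (commGraph G).IsPerfectGraph := by
  obtain ⟨f⟩ := nonempty_embedding_cycleGraph_five_commGraph hK hL hM hKL' hKM' hLM'
  exact not_isPerfectGraph_of_embedding_cycleGraph le_rfl (by decide) f

theorem three_centralizing_nonabelian_subgroups_commGraph_not_isPerfect
    (G : Type*) [Group G] [Finite G] (K L M : Subgroup G)
    (hKL : K ≠ L) (hKM : K ≠ M) (hLM : L ≠ M)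
    (hK : ∃ x ∈ K, ∃ y ∈ K, x * y ≠ y * x)
    (hL : ∃ x ∈ L, ∃ y ∈ L, x * y ≠ y * x)
    (hM : ∃ x ∈ M, ∃ y ∈ M, x * y ≠ y * x)
    (hKL' : ∀ x ∈ K, ∀ y ∈ L, Commute x y)
    (hKM' : ∀ x ∈ K, ∀ z ∈ M, Commute x z)
    (hLM' : ∀ y ∈ L, ∀ z ∈ M, Commute y z) :
    ¬ (commGraph G).IsPerfectGraph :=
  three_centralizing_nonabelian_subgroups_commGraph_not_isPerfect_general G K L M hK hL hM hKL' hKM'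
    hLM'
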